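/- For integers n ≥ 1, the logarithmic-derivative identity P_n'(z; β−1, α+1)/P_n(z; β−1, α+1) = (n/z)[1 − ((1+α)/(n−1+β)) · P_{n−1}(z; β−1, α+2)/P_n(z; β−1, α+1)] holds; equivalently, z P_n'(z; β−1, α+1) = n P_n(z; β−1, α+1) − (n(1+α)/(n−1+β)) P_{n−1}(z; β−1, α+2) as a polynomial identity. -/

import Mathlib

open Finset

noncomputable def poch (a : ℝ) (k : ℕ) : ℝ := ∏ i ∈ Finset.range k, (a + i)

noncomputable def HR (n : ℕ) (α β : ℝ) (z : ℝ) : ℝ :=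
  (poch β n / poch (α + 1) n) *
    ∑ k ∈ Finset.range (n + 1),
      (poch (-(n : ℝ)) k * poch (α + 1) k) / ((k.factorial : ℝ) * poch (1 - β - (n : ℝ)) k) * z ^ k

/-!
Comparing coefficients of `z^k`, the identity reduces to
`(n - k) [z^k] P_n(z; β-1, α+1) = n(1+α)/(n-1+β) [z^k] P_{n-1}(z; β-1, α+2)`,
which follows from the Pochhammer relation `(x - k) (-x)_k = x (1 - x)_k` at `x = n`
together with `(b)_n = b (b+1)_{n-1}` and `(a+1)_n = (a+1)_{n-1} (a+n)`.
-/

lemma poch_succ (a : ℝ) (k : ℕ) : poch a (k + 1) = poch a k * (a + k) := by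
  simp [poch, prod_range_succ]

lemma poch_succ' (a : ℝ) (k : ℕ) : poch a (k + 1) = a * poch (a + 1) k := by
  induction k with
  | zero => simp [poch]
  | succ k ih => rw [poch_succ, ih, poch_succ]; push_cast; ring

lemma sub_mul_poch_neg (x : ℝ) (k : ℕ) : (x - k) * poch (-x) k = x * poch (1 - x) k := by
  induction k with
  | zero => simp [poch]
  | succ k ih =>
    rw [poch_succ, poch_succ]
    push_cast
    linear_combination (k + 1 - x) * ih

noncomputable def hrCoeff (n : ℕ) (a b : ℝ) (k : ℕ) : ℝ :=
  poch b n / poch (a + 1) n *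
    (poch (-(n : ℝ)) k * poch (a + 1) k / ((k.factorial : ℝ) * poch (1 - b - n) k))

lemma HR_eq_sum (n : ℕ) (a b z : ℝ) :
    HR n a b z = ∑ k ∈ range (n + 1), hrCoeff n a b k * z ^ k := by
  rw [HR, mul_sum]
  exact sum_congr rfl fun k _ => by rw [hrCoeff]; ring

lemma sub_mul_hrCoeff_succ (n : ℕ) (a b : ℝ) (k : ℕ) :
    ((n : ℝ) + 1 - k) * hrCoeff (n + 1) a b k
      = ((n + 1) * b / (n + a + 1)) * hrCoeff n a (b + 1) k := by
  have hpoch := sub_mul_poch_neg ((n : ℝ) + 1) k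
  rw [show 1 - ((n : ℝ) + 1) = -n by ring] at hpoch
  rw [hrCoeff, hrCoeff, poch_succ' b, poch_succ (a + 1),
    show 1 - b - ((n + 1 : ℕ) : ℝ) = 1 - (b + 1) - n by push_cast; ring]
  push_cast
  calc
    _ = b / (n + a + 1) * (poch (b + 1) n / poch (a + 1) n)
          * (((n : ℝ) + 1 - k) * poch (-((n : ℝ) + 1)) k) * poch (a + 1) k
          / ((k.factorial : ℝ) * poch (1 - (b + 1) - n) k) := by
      simp only [div_eq_mul_inv, mul_inv]; ring
    _ = _ := by rw [hpoch]; ring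

lemma mul_deriv_sum_mul_pow (c : ℕ → ℝ) (N : ℕ) (z : ℝ) :
    z * deriv (fun t => ∑ k ∈ range N, c k * t ^ k) z = ∑ k ∈ range N, (k : ℝ) * c k * z ^ k := by
  rw [deriv_fun_sum fun k _ => (differentiableAt_pow k).const_mul _, mul_sum]
  refine sum_congr rfl fun k _ => ?_
  rw [deriv_const_mul _ (differentiableAt_pow k), deriv_pow_field]
  cases k with
  | zero => simp
  | succ j => rw [Nat.add_sub_cancel, pow_succ]; push_cast; ring

lemma sum_mul_pow_of_sub_mul_eq (m : ℕ) (c d : ℕ → ℝ) (r z : ℝ)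
    (h : ∀ k, ((m : ℝ) + 1 - k) * c k = r * d k) :
    ∑ k ∈ range (m + 2), (k : ℝ) * c k * z ^ k
      = ((m : ℝ) + 1) * ∑ k ∈ range (m + 2), c k * z ^ k - r * ∑ k ∈ range (m + 1), d k * z ^ k := by
  have hsum : ∑ k ∈ range (m + 2), ((m : ℝ) + 1 - k) * c k * z ^ k
      = r * ∑ k ∈ range (m + 1), d k * z ^ k := by
    rw [sum_range_succ, mul_sum]
    push_cast
    simp only [sub_self, zero_mul, add_zero, h, mul_assoc]
  rw [← hsum, mul_sum, ← sum_sub_distrib]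
  exact sum_congr rfl fun k _ => by ring

theorem hr_log_derivative_identity_general (n : ℕ) (hn : 1 ≤ n) (α β : ℝ) :
    ∀ z : ℝ,
      z * deriv (fun t => HR n (β - 1) (α + 1) t) z
      = (n : ℝ) * HR n (β - 1) (α + 1) z
        - ((n : ℝ) * (1 + α) / ((n : ℝ) - 1 + β)) * HR (n - 1) (β - 1) (α + 2) z := by
  obtain ⟨m, rfl⟩ := Nat.exists_eq_add_of_le' hn
  intro z
  have hcoeff : ∀ k, ((m : ℝ) + 1 - k) * hrCoeff (m + 1) (β - 1) (α + 1) k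
      = (((m + 1 : ℕ) : ℝ) * (1 + α) / (((m + 1 : ℕ) : ℝ) - 1 + β)) * hrCoeff m (β - 1) (α + 2) k := by
    intro k
    rw [sub_mul_hrCoeff_succ, show α + 1 + 1 = α + 2 by ring]
    push_cast
    ring_nf
  simp only [HR_eq_sum, Nat.add_sub_cancel, mul_deriv_sum_mul_pow]
  push_cast
  exact sum_mul_pow_of_sub_mul_eq m _ _ _ z (by exact_mod_cast hcoeff)

theorem hr_log_derivative_identity (n : ℕ) (hn : 1 ≤ n) (α β : ℝ)
    (hden : (n : ℝ) - 1 + β ≠ 0)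
    (hβ : ∀ j < n, α + 1 + (j : ℝ) ≠ 0)
    (hα : ∀ j < n, β + (j : ℝ) ≠ 0)
    (hd : ∀ j < n, 1 - (α + 1) - (n : ℝ) + (j : ℝ) ≠ 0) :
    ∀ z : ℝ,
      z * deriv (fun t => HR n (β - 1) (α + 1) t) z
      = (n : ℝ) * HR n (β - 1) (α + 1) z
        - ((n : ℝ) * (1 + α) / ((n : ℝ) - 1 + β)) * HR (n - 1) (β - 1) (α + 2) z :=
  hr_log_derivative_identity_general n hn α β
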